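/- arXiv:2301.00927 — 2 statements merged into one kernel-verified Lean document; each statement's English description precedes it below -/
import Mathlib

section
/- Let m ∈ ℕ, let U₁, …, U_m ∈ ℝ^m be orthonormal (Uᵢ · Uⱼ = δ_{ij}), let λ : Fin m → ℝ with λᵢ ≥ 0 for all i, and set G = Σ_{i=1}^m λᵢ · (Uᵢ Uᵢᵀ). Let δ ≥ 0, let S ⊆ {1,…,m}, and let V₁, …, V_m ∈ ℝ^m be vectors with Euclidean norm ‖Vⱼ − Uⱼ‖₂ ≤ δ for every j ∈ S. Then: trace( G · Σ_{j∈S} Vⱼ Vⱼᵀ ) ≤ (1 + 2δ) · Σ_{j∈S} λⱼ + |S| · δ² · Σ_{i=1}^m λᵢ. -/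
/-!
Write `V j = U j + e` with `‖e‖ ≤ δ`. By orthonormality `⟪U i, V j⟫ = [i = j] + ⟪U i, e⟫`, and by
Cauchy–Schwarz `|⟪U i, e⟫| ≤ δ`. Since `tr(u uᵀ v vᵀ) = ⟪u, v⟫²`, the trace is
`∑_{j ∈ S} ∑ i, λ i ⟪U i, V j⟫²`, and each inner sum is at most
`(1 + 2δ) λ j + δ² ∑ i, λ i`: the diagonal term gives `(1 + ⟪U j, e⟫)² ≤ 1 + 2δ + δ²`, the
others `⟪U i, e⟫² ≤ δ²`.
-/

open Matrix

namespace Matrix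

variable {n : Type*} [Fintype n]

theorem trace_vecMulVec_self_mul_vecMulVec_self {R : Type*} [CommRing R] (u v : n → R) :
    trace (vecMulVec u u * vecMulVec v v) = (u ⬝ᵥ v) ^ 2 := by
  rw [vecMulVec_mul_vecMulVec, trace_vecMulVec, dotProduct_smul, smul_eq_mul, sq]

theorem sq_dotProduct_le_dotProduct_self_mul (u v : n → ℝ) :
    (u ⬝ᵥ v) ^ 2 ≤ (u ⬝ᵥ u) * (v ⬝ᵥ v) := by
  simpa only [dotProduct, sq] using Finset.sum_mul_sq_le_sq_mul_sq Finset.univ u v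

theorem trace_weighted_sum_vecMulVec_mul_sum_vecMulVec {ι κ : Type*} [Fintype ι]
    (U : ι → n → ℝ) (l : ι → ℝ) (S : Finset κ) (V : κ → n → ℝ) :
    trace ((∑ i, l i • vecMulVec (U i) (U i)) * ∑ j ∈ S, vecMulVec (V j) (V j)) =
      ∑ j ∈ S, ∑ i, l i * (U i ⬝ᵥ V j) ^ 2 := by
  simp only [Matrix.mul_sum, Matrix.sum_mul, trace_sum, smul_mul, trace_smul,
    trace_vecMulVec_self_mul_vecMulVec_self, smul_eq_mul]

variable {ι : Type*} [Fintype ι] [DecidableEq ι] {U : ι → n → ℝ}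

theorem weighted_sum_sq_dotProduct_le_of_orthonormal
    (hU : ∀ i j, U i ⬝ᵥ U j = if i = j then (1 : ℝ) else 0)
    {l : ι → ℝ} (hl : ∀ i, 0 ≤ l i) {δ : ℝ} (hδ : 0 ≤ δ) {j : ι} {v : n → ℝ}
    (hv : (v - U j) ⬝ᵥ (v - U j) ≤ δ ^ 2) :
    ∑ i, l i * (U i ⬝ᵥ v) ^ 2 ≤ (1 + 2 * δ) * l j + δ ^ 2 * ∑ i, l i := by
  set e := v - U j
  have he : ∀ i, (U i ⬝ᵥ e) ^ 2 ≤ δ ^ 2 := fun i =>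
    calc (U i ⬝ᵥ e) ^ 2 ≤ (U i ⬝ᵥ U i) * (e ⬝ᵥ e) := sq_dotProduct_le_dotProduct_self_mul _ _
      _ ≤ δ ^ 2 := by rw [hU, if_pos rfl, one_mul]; exact hv
  have hsplit : ∀ i, U i ⬝ᵥ v = (if i = j then 1 else 0) + U i ⬝ᵥ e := fun i => by
    rw [← hU, ← dotProduct_add, add_sub_cancel]
  have hterm : ∀ i,
      l i * (U i ⬝ᵥ v) ^ 2 ≤ (if i = j then (1 + 2 * δ) * l i else 0) + δ ^ 2 * l i := by
    intro i
    rw [hsplit]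
    by_cases h : i = j
    · subst h
      have hle : U i ⬝ᵥ e ≤ δ := abs_le_of_sq_le_sq' (he i) hδ |>.2
      simp only [if_true]
      nlinarith [hl i, he i, hle]
    · simp only [if_neg h, zero_add]
      nlinarith [hl i, he i]
  calc ∑ i, l i * (U i ⬝ᵥ v) ^ 2
      ≤ ∑ i, ((if i = j then (1 + 2 * δ) * l i else 0) + δ ^ 2 * l i) :=
        Finset.sum_le_sum fun i _ => hterm i
    _ = (1 + 2 * δ) * l j + δ ^ 2 * ∑ i, l i := by
        rw [Finset.sum_add_distrib, Finset.sum_ite_eq' Finset.univ j, Finset.mul_sum]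
        simp

end Matrix

theorem trace_perturbed_proj_bound_general {m : ℕ} (U : Fin m → (Fin m → ℝ))
    (hU : ∀ i j : Fin m, U i ⬝ᵥ U j = if i = j then (1 : ℝ) else 0)
    (l : Fin m → ℝ) (hl : ∀ i, 0 ≤ l i)
    (δ : ℝ) (S : Finset (Fin m)) (V : Fin m → (Fin m → ℝ))
    (hV : ∀ j ∈ S, Real.sqrt (∑ k : Fin m, (V j k - U j k) ^ 2) ≤ δ) :
    Matrix.trace
        ((∑ i : Fin m, l i • Matrix.vecMulVec (U i) (U i)) *
          ∑ j ∈ S, Matrix.vecMulVec (V j) (V j)) ≤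
      (1 + 2 * δ) * ∑ j ∈ S, l j + (S.card : ℝ) * δ ^ 2 * ∑ i : Fin m, l i := by
  rw [trace_weighted_sum_vecMulVec_mul_sum_vecMulVec]
  calc ∑ j ∈ S, ∑ i, l i * (U i ⬝ᵥ V j) ^ 2
      ≤ ∑ j ∈ S, ((1 + 2 * δ) * l j + δ ^ 2 * ∑ i, l i) := Finset.sum_le_sum fun j hj => by
        obtain ⟨hδ, hVj⟩ := Real.sqrt_le_iff.mp (hV j hj)
        exact weighted_sum_sq_dotProduct_le_of_orthonormal hU hl hδ
          (by simpa only [dotProduct, Pi.sub_apply, sq] using hVj)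
    _ = (1 + 2 * δ) * ∑ j ∈ S, l j + (S.card : ℝ) * δ ^ 2 * ∑ i, l i := by
        rw [Finset.sum_add_distrib, ← Finset.mul_sum, Finset.sum_const, nsmul_eq_mul]
        ring

/-- Deterministic core of Lemma 2 (PCA truncation error bound): if the `U j` are
orthonormal, the `λ j` nonnegative, and `‖V j − U j‖₂ ≤ δ` for `j ∈ S`, then
`tr(G · ∑_{j∈S} V j V jᵀ) ≤ (1 + 2δ) ∑_{j∈S} λ j + |S| δ² ∑ i, λ i`
where `G = ∑ i, λ i • U i U iᵀ`. -/
theorem trace_perturbed_proj_bound {m : ℕ} (U : Fin m → (Fin m → ℝ))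
    (hU : ∀ i j : Fin m, U i ⬝ᵥ U j = if i = j then (1 : ℝ) else 0)
    (l : Fin m → ℝ) (hl : ∀ i, 0 ≤ l i)
    (δ : ℝ) (hδ : 0 ≤ δ) (S : Finset (Fin m)) (V : Fin m → (Fin m → ℝ))
    (hV : ∀ j ∈ S, Real.sqrt (∑ k : Fin m, (V j k - U j k) ^ 2) ≤ δ) :
    Matrix.trace
        ((∑ i : Fin m, l i • Matrix.vecMulVec (U i) (U i)) *
          ∑ j ∈ S, Matrix.vecMulVec (V j) (V j)) ≤
      (1 + 2 * δ) * ∑ j ∈ S, l j + (S.card : ℝ) * δ ^ 2 * ∑ i : Fin m, l i :=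
  trace_perturbed_proj_bound_general U hU l hl δ S V hV
end

section
/- Let S and S' be measurable spaces, let κ be a Markov kernel from S to S' (so κ(x) is a probability measure on S' for each x ∈ S), let μ be a measure on S, let σ be a measure on S', and let ω ∈ [0,∞) be such that the measure μ.bind κ (defined by (μ.bind κ)(A) = ∫ κ(x)(A) dμ(x)) satisfies μ.bind κ ≤ ω • σ. Then for every measurable f : S' → [0,∞]: ∫_S ( ∫_{S'} f d(κ x) )² dμ(x) ≤ ω · ∫_{S'} f² dσ. -/
open MeasureTheory ProbabilityTheory ENNReal

theorem ENNReal.sq_lintegral_le_measure_univ_mul_lintegral_sq {α : Type*} [MeasurableSpace α]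
    (ν : Measure α) {f : α → ℝ≥0∞} (hf : AEMeasurable f ν) :
    (∫⁻ x, f x ∂ν) ^ 2 ≤ ν Set.univ * ∫⁻ x, f x ^ 2 ∂ν := by
  have hpq : Real.HolderConjugate 2 2 := .two_two
  have cauchy_schwarz : ∫⁻ x, f x ∂ν ≤
      (∫⁻ x, f x ^ (2 : ℝ) ∂ν) ^ (1 / 2 : ℝ) * (ν Set.univ) ^ (1 / 2 : ℝ) := by
    simpa using ENNReal.lintegral_mul_le_Lp_mul_Lq ν hpq hf aemeasurable_const (g := 1)
  calc (∫⁻ x, f x ∂ν) ^ 2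
      ≤ ((∫⁻ x, f x ^ (2 : ℝ) ∂ν) ^ (1 / 2 : ℝ) * (ν Set.univ) ^ (1 / 2 : ℝ)) ^ 2 := by
        gcongr
    _ = ν Set.univ * ∫⁻ x, f x ^ 2 ∂ν := by
        rw [mul_pow, ← ENNReal.rpow_natCast, ← ENNReal.rpow_natCast, ← ENNReal.rpow_mul,
          ← ENNReal.rpow_mul]
        norm_num [mul_comm]

theorem MeasureTheory.Measure.lintegral_lintegral_le_of_bind_le_smul {α β : Type*}
    [MeasurableSpace α] [MeasurableSpace β] {μ : Measure α} {κ : α → Measure β}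
    {σ : Measure β} {ω : ℝ≥0∞} (hκ : Measurable κ) (hbind : μ.bind κ ≤ ω • σ)
    {g : β → ℝ≥0∞} (hg : Measurable g) :
    ∫⁻ x, ∫⁻ y, g y ∂κ x ∂μ ≤ ω * ∫⁻ y, g y ∂σ :=
  calc ∫⁻ x, ∫⁻ y, g y ∂κ x ∂μ
      = ∫⁻ y, g y ∂μ.bind κ := (Measure.lintegral_bind hκ.aemeasurable hg.aemeasurable).symm
    _ ≤ ∫⁻ y, g y ∂(ω • σ) := lintegral_mono' hbind le_rfl
    _ = ω * ∫⁻ y, g y ∂σ := by rw [lintegral_smul_measure, smul_eq_mul]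

theorem concentration_jensen_general {S S' : Type*} [MeasurableSpace S] [MeasurableSpace S']
    (κ : Kernel S S') [IsMarkovKernel κ] (μ : Measure S) (σ : Measure S')
    (ω : ℝ≥0∞) (hbind : μ.bind (fun x => κ x) ≤ ω • σ) :
    ∀ f : S' → ℝ≥0∞, Measurable f →
      ∫⁻ x, (∫⁻ y, f y ∂(κ x)) ^ 2 ∂μ ≤ ω * ∫⁻ y, (f y) ^ 2 ∂σ := by
  intro f hf
  calc ∫⁻ x, (∫⁻ y, f y ∂(κ x)) ^ 2 ∂μ
      ≤ ∫⁻ x, ∫⁻ y, f y ^ 2 ∂(κ x) ∂μ := lintegral_mono fun x => by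
        simpa using ENNReal.sq_lintegral_le_measure_univ_mul_lintegral_sq (κ x) hf.aemeasurable
    _ ≤ ω * ∫⁻ y, f y ^ 2 ∂σ :=
        Measure.lintegral_lintegral_le_of_bind_le_smul κ.measurable hbind (hf.pow_const 2)

/-- Jensen plus change of measure via the concentration coefficient: if `μ.bind κ ≤ ω • σ`
for a Markov kernel `κ`, then `∫ (∫ f dκ(x))² dμ(x) ≤ ω ∫ f² dσ` for every
measurable `f : S' → [0,∞]`. -/
theorem concentration_jensen {S S' : Type*} [MeasurableSpace S] [MeasurableSpace S']
    (κ : Kernel S S') [IsMarkovKernel κ] (μ : Measure S) (σ : Measure S')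
    (ω : ℝ≥0∞) (hω : ω ≠ ⊤) (hbind : μ.bind (fun x => κ x) ≤ ω • σ) :
    ∀ f : S' → ℝ≥0∞, Measurable f →
      ∫⁻ x, (∫⁻ y, f y ∂(κ x)) ^ 2 ∂μ ≤ ω * ∫⁻ y, (f y) ^ 2 ∂σ :=
  concentration_jensen_general κ μ σ ω hbind
end
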